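/- For every c > 0 and every ū₀ ∈ [0,1], the pair (V₁(c,ū₀), V₂(c,ū₀)) is the unique pair of nonnegative real numbers (u₁,u₂) satisfying the Multi-Leader-Follower best-response system u₁ = (2u₂ − ū₀u₂ − ū₀ + 5)/(3cu₂ + 3c + 2u₂ + 2) and u₂ = (u₁ + ū₀u₁ + ū₀ + 4)/(3cu₁ + 3c + 2u₁ + 2); moreover both V₁(c,ū₀) > 0 and V₂(c,ū₀) > 0. -/
import Mathlib


/-- Discriminant-type quantity appearing in the Multi-Leader-Follower equilibrium. -/
noncomputable def Delta (c u : ℝ) : ℝ :=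
  Real.sqrt ((3 + 3 * c + u) * (36 + 57 * c + 9 * c ^ 2 + u - u ^ 2) / (4 + 3 * c - u))

/-- Multi-Leader-Follower equilibrium advertisement efficiency of major player 2. -/
noncomputable def V2 (c u : ℝ) : ℝ :=
  (-1 - 3 * c + u + Delta c u) / (2 * (2 + 3 * c))

/-- Multi-Leader-Follower equilibrium advertisement efficiency of major player 1. -/
noncomputable def V1 (c u : ℝ) : ℝ :=
  (1 / (3 + 3 * c + u)) *
    (1 - 2 * u + (1 + 3 * c - u - Delta c u) * (u - 3 * c - 4) / (2 * (2 + 3 * c)))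

set_option maxHeartbeats 1000000 in
theorem stmt_16 (c ubar₀ : ℝ) (hc : 0 < c) (h₀ : ubar₀ ∈ Set.Icc (0 : ℝ) 1) :
    0 < V1 c ubar₀ ∧ 0 < V2 c ubar₀ ∧
    V1 c ubar₀ = (2 * V2 c ubar₀ - ubar₀ * V2 c ubar₀ - ubar₀ + 5)
      / (3 * c * V2 c ubar₀ + 3 * c + 2 * V2 c ubar₀ + 2) ∧
    V2 c ubar₀ = (V1 c ubar₀ + ubar₀ * V1 c ubar₀ + ubar₀ + 4)
      / (3 * c * V1 c ubar₀ + 3 * c + 2 * V1 c ubar₀ + 2) ∧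
    ∀ u₁ u₂ : ℝ, 0 ≤ u₁ → 0 ≤ u₂ →
      u₁ = (2 * u₂ - ubar₀ * u₂ - ubar₀ + 5) / (3 * c * u₂ + 3 * c + 2 * u₂ + 2) →
      u₂ = (u₁ + ubar₀ * u₁ + ubar₀ + 4) / (3 * c * u₁ + 3 * c + 2 * u₁ + 2) →
      u₁ = V1 c ubar₀ ∧ u₂ = V2 c ubar₀ := by
  obtain ⟨ha0, ha1⟩ := h₀
  set a : ℝ := ubar₀ with haDef
  have h4 : (0:ℝ) < 4 + 3 * c - a := by linarith
  have h3 : (0:ℝ) < 3 + 3 * c + a := by linarith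
  have hN : (0:ℝ) < 36 + 57 * c + 9 * c ^ 2 + a - a ^ 2 := by nlinarith
  have hk : (0:ℝ) < 2 + 3 * c := by linarith
  set d : ℝ := Delta c a with hdDef
  have hd0 : 0 ≤ d := Real.sqrt_nonneg _
  have hd2 : d ^ 2 = (3 + 3 * c + a) * (36 + 57 * c + 9 * c ^ 2 + a - a ^ 2) / (4 + 3 * c - a) := by
    rw [hdDef, Delta, Real.sq_sqrt]
    positivity
  have hd2' : d ^ 2 * (4 + 3 * c - a)
      = (3 + 3 * c + a) * (36 + 57 * c + 9 * c ^ 2 + a - a ^ 2) := by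
    rw [hd2]; field_simp
  have hS : (1 + 3 * c - a) ^ 2 * (4 + 3 * c - a)
      < (3 + 3 * c + a) * (36 + 57 * c + 9 * c ^ 2 + a - a ^ 2) := by
    nlinarith [sq_nonneg c, sq_nonneg a, sq_nonneg (c - a), mul_pos hc hc,
      mul_pos (mul_pos hc hc) hc, mul_nonneg ha0 (le_of_lt hc), sq_nonneg (c*a)]
  have hsq : (1 + 3 * c - a) ^ 2 < d ^ 2 := by
    nlinarith [hd2', hS, h4]
  have hdgt : 1 + 3 * c - a < d := by
    nlinarith [hd0]
  set v2 : ℝ := V2 c a with hv2Def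
  have hV2def : v2 = (-1 - 3 * c + a + d) / (2 * (2 + 3 * c)) := rfl
  have h2k : (2 * (2 + 3 * c)) ≠ 0 := by positivity
  have hv2mul : 2 * (2 + 3 * c) * v2 = -1 - 3 * c + a + d := by
    rw [hV2def, mul_div_cancel₀ _ h2k]
  have hv2pos : 0 < v2 := by
    rw [hV2def]
    apply div_pos (by linarith) (by linarith)
  have hquad : (3 * c + 2) * (3 * c + 4 - a) * v2 ^ 2
      + ((3 * c + 2) * (3 * c + 3 - 2 * a) - (2 + a - a ^ 2)) * v2
      - ((1 + a) * (5 - a) + (a + 4) * (3 * c + 2)) = 0 := by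
    have hm : 4 * (2 + 3 * c) ^ 2 * ((3 * c + 2) * (3 * c + 4 - a) * v2 ^ 2
        + ((3 * c + 2) * (3 * c + 3 - 2 * a) - (2 + a - a ^ 2)) * v2
        - ((1 + a) * (5 - a) + (a + 4) * (3 * c + 2))) = 0 := by
      linear_combination ((3 * c + 2) * (3 * c + 4 - a) * (2 * (2 + 3 * c) * v2 + (-1 - 3 * c + a + d))
        + 2 * (2 + 3 * c) * ((3 * c + 2) * (3 * c + 3 - 2 * a) - (2 + a - a ^ 2))) * hv2mul
        + (3 * c + 2) * hd2'
    have h4k : (4 * (2 + 3 * c) ^ 2 : ℝ) ≠ 0 := by positivity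
    exact (mul_eq_zero.1 hm).resolve_left h4k
  set v1 : ℝ := V1 c a with hv1Def
  have hV1rel : v1 * (3 + 3 * c + a) = (3 * c + 4 - a) * v2 + 1 - 2 * a := by
    rw [hv1Def, V1, hV2def]
    show (1 / (3 + 3 * c + a)) *
      (1 - 2 * a + (1 + 3 * c - a - d) * (a - 3 * c - 4) / (2 * (2 + 3 * c))) * (3 + 3 * c + a)
      = (3 * c + 4 - a) * ((-1 - 3 * c + a + d) / (2 * (2 + 3 * c))) + 1 - 2 * a
    field_simp
    ring
  have hden2 : (0:ℝ) < 3 * c * v2 + 3 * c + 2 * v2 + 2 := by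
    nlinarith [mul_pos hc hv2pos]
  have heq1cross : v1 * (3 * c * v2 + 3 * c + 2 * v2 + 2) = 2 * v2 - a * v2 - a + 5 := by
    have hm : (3 + 3 * c + a) * (v1 * (3 * c * v2 + 3 * c + 2 * v2 + 2))
        = (3 + 3 * c + a) * (2 * v2 - a * v2 - a + 5) := by
      linear_combination (3 * c * v2 + 3 * c + 2 * v2 + 2) * hV1rel + hquad
    exact mul_left_cancel₀ h3.ne' hm
  have heq1 : v1 = (2 * v2 - a * v2 - a + 5) / (3 * c * v2 + 3 * c + 2 * v2 + 2) := by
    rw [eq_div_iff hden2.ne']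
    exact heq1cross
  have hv1pos : 0 < v1 := by
    rw [heq1]
    apply div_pos (by nlinarith) hden2
  have hden1 : (0:ℝ) < 3 * c * v1 + 3 * c + 2 * v1 + 2 := by
    nlinarith [mul_pos hc hv1pos]
  have heq2 : v2 = (v1 + a * v1 + a + 4) / (3 * c * v1 + 3 * c + 2 * v1 + 2) := by
    rw [eq_div_iff hden1.ne']
    have hm : (3 + 3 * c + a) * (v2 * (3 * c * v1 + 3 * c + 2 * v1 + 2))
        = (3 + 3 * c + a) * (v1 + a * v1 + a + 4) := by
      linear_combination ((3 * c + 2) * v2 - (1 + a)) * hV1rel + hquad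
    exact mul_left_cancel₀ h3.ne' hm
  refine ⟨hv1pos, hv2pos, heq1, heq2, ?_⟩
  intro u₁ u₂ hu1 hu2 he1 he2
  have hdu2 : (0:ℝ) < 3 * c * u₂ + 3 * c + 2 * u₂ + 2 := by
    nlinarith [mul_nonneg hc.le hu2]
  have hdu1 : (0:ℝ) < 3 * c * u₁ + 3 * c + 2 * u₁ + 2 := by
    nlinarith [mul_nonneg hc.le hu1]
  have E1 : u₁ * (3 * c * u₂ + 3 * c + 2 * u₂ + 2) = 2 * u₂ - a * u₂ - a + 5 := by
    rw [he1]
    exact div_mul_cancel₀ _ hdu2.ne'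
  have E2 : u₂ * (3 * c * u₁ + 3 * c + 2 * u₁ + 2) = u₁ + a * u₁ + a + 4 := by
    rw [he2]
    exact div_mul_cancel₀ _ hdu1.ne'
  have hquadU : (3 * c + 2) * (3 * c + 4 - a) * u₂ ^ 2
      + ((3 * c + 2) * (3 * c + 3 - 2 * a) - (2 + a - a ^ 2)) * u₂
      - ((1 + a) * (5 - a) + (a + 4) * (3 * c + 2)) = 0 := by
    linear_combination ((1 + a) - (3 * c + 2) * u₂) * E1 + ((3 * c + 2) * (u₂ + 1)) * E2
  have hfac : (u₂ - v2) * ((3 * c + 2) * (3 * c + 4 - a) * (u₂ + v2)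
      + ((3 * c + 2) * (3 * c + 3 - 2 * a) - (2 + a - a ^ 2))) = 0 := by
    linear_combination hquadU - hquad
  have hu2v2 : u₂ = v2 := by
    rcases mul_eq_zero.1 hfac with h | h
    · linarith [sub_eq_zero.1 h]
    · exfalso
      have hC : u₂ * v2 * ((3 * c + 2) * (3 * c + 4 - a))
          = -((1 + a) * (5 - a) + (a + 4) * (3 * c + 2)) := by
        linear_combination u₂ * h - hquadU
      nlinarith [mul_nonneg hu2 hv2pos.le,
        mul_pos (by linarith : (0:ℝ) < 3 * c + 2) (by linarith : (0:ℝ) < 3 * c + 4 - a)]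
  refine ⟨?_, hu2v2⟩
  have E1' : u₁ * (3 * c * v2 + 3 * c + 2 * v2 + 2) = 2 * v2 - a * v2 - a + 5 := by
    rw [← hu2v2]; exact E1
  exact mul_right_cancel₀ hden2.ne' (E1'.trans heq1cross.symm)
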